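/- arXiv:2303.06940 — 3 statements merged into one kernel-verified Lean document; each statement's English description precedes it below -/
import Mathlib

section
/- Let X be a finite T0 topological space and k a commutative ring. For points p, q ∈ X, the k-module Hom(k_{U_p}, k_{U_q}) of sheaf morphisms is free of rank one (generated by the canonical inclusion) if p ≥ q in the specialization order, and is zero otherwise. -/
open CategoryTheory

/-- The sheaf `k_{U_p}` on a finite T0 space, in the functor-on-the-specialization-poset
model: `q ↦ free k-module on Hom(p,q)`, i.e. `k` if `p ≤ q` and `0` otherwise. -/
noncomputable def kU (k : Type) [CommRing k] {X : Type} [PartialOrder X] (p : X) :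
    X ⥤ ModuleCat k :=
  coyoneda.obj (Opposite.op p) ⋙ ModuleCat.free k

/-- The canonical inclusion `i_{pq} : k_{U_p} ↪ k_{U_q}` for `q ≤ p` (then `U_p ⊆ U_q`). -/
noncomputable def iotaPQ (k : Type) [CommRing k] {X : Type} [PartialOrder X] {p q : X}
    (h : q ≤ p) : kU k p ⟶ kU k q :=
  CategoryTheory.Functor.whiskerRight (coyoneda.map (homOfLE h).op) (ModuleCat.free k)

section Aux

variable {k : Type} [CommRing k] {X : Type} [PartialOrder X] {p q : X}

lemma kU_map_freeMk (r : X) {x y : X} (g : x ⟶ y) (u : r ⟶ x) :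
    (kU k r).map g (ModuleCat.freeMk u) = ModuleCat.freeMk (u ≫ g) := by
  show (ModuleCat.free k).map _ _ = _
  rw [ModuleCat.free_map_apply]
  rfl

lemma key (f : kU k p ⟶ kU k q) (x : X) (g : p ⟶ x) :
    f.app x (ModuleCat.freeMk g) = (kU k q).map g (f.app p (ModuleCat.freeMk (𝟙 p))) := by
  have h1 : (ModuleCat.freeMk g : (kU k p).obj x)
      = (kU k p).map g (ModuleCat.freeMk (𝟙 p)) := by
    rw [kU_map_freeMk]; simp
  have h2 := congrArg (fun φ : (kU k p).obj p ⟶ (kU k q).obj x => φ (ModuleCat.freeMk (𝟙 p))) (f.naturality g)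
  simp only [ConcreteCategory.comp_apply] at h2
  rw [h1]; exact h2

lemma iota_app (h : q ≤ p) (x : X) (g : p ⟶ x) :
    (iotaPQ k h).app x (ModuleCat.freeMk g) = ModuleCat.freeMk (homOfLE h ≫ g) := by
  change ConcreteCategory.hom ((ModuleCat.free k).map (coyoneda.map (homOfLE h).op |>.app x)) _ = _
  rw [ModuleCat.free_map_apply]
  rfl

lemma smul_app' (c : k) (f : kU k p ⟶ kU k q) (x : X) (v : (kU k p).obj x) :
    (c • f).app x v = c • (f.app x v) := rfl

noncomputable def evalAt (h : q ≤ p) : ((kU k q).obj p) →ₗ[k] k :=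
  Finsupp.lapply (homOfLE h)

lemma vrep (h : q ≤ p) (v : (kU k q).obj p) :
    v = evalAt (k := k) h v • (ModuleCat.freeMk (homOfLE h) : (kU k q).obj p) := by
  have H : ∀ (w : (q ⟶ p) →₀ k), w = w (homOfLE h) • Finsupp.single (homOfLE h) 1 := by
    intro w
    ext a
    rw [Subsingleton.elim a (homOfLE h)]
    simp
  exact H v

lemma eval_freeMk (h : q ≤ p) :
    evalAt (k := k) h (ModuleCat.freeMk (homOfLE h)) = 1 :=
  Finsupp.single_eq_same

end Aux

/-- On a finite T0 space, `Hom(k_{U_p}, k_{U_q})` is a free `k`-module of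
rank one generated by the canonical inclusion when `p ≥ q` in the specialization order,
and is zero otherwise. -/
theorem stmt6 (k : Type) [CommRing k] (X : Type) [PartialOrder X] [Finite X] (p q : X) :
    (∀ h : q ≤ p, ∃ e : (kU k p ⟶ kU k q) ≃ₗ[k] k, e (iotaPQ k h) = 1) ∧
    (¬ q ≤ p → ∀ f : kU k p ⟶ kU k q, f = 0) := by
  constructor
  · intro h
    have hiota : ∀ c : k,
        evalAt (k := k) h ((c • iotaPQ k h).app p (ModuleCat.freeMk (𝟙 p))) = c := by
      intro c
      erw [smul_app', iota_app, Category.comp_id, map_smul, eval_freeMk, smul_eq_mul, mul_one]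
    refine ⟨{ toFun := fun f => evalAt (k := k) h (f.app p (ModuleCat.freeMk (𝟙 p)))
              map_add' := fun f g => by
                show evalAt (k := k) h ((f + g).app p (ModuleCat.freeMk (𝟙 p))) = _
                rw [NatTrans.app_add]; exact map_add _ _ _
              map_smul' := fun c f => by
                show evalAt (k := k) h ((c • f).app p (ModuleCat.freeMk (𝟙 p))) = _
                erw [smul_app']; exact map_smul _ _ _
              invFun := fun c => c • iotaPQ k h
              left_inv := ?_
              right_inv := fun c => hiota c }, ?_⟩
    · intro f
      apply NatTrans.ext
      funext x
      apply ModuleCat.free_hom_ext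
      intro g
      show (_ • iotaPQ k h).app x (ModuleCat.freeMk g) = f.app x (ModuleCat.freeMk g)
      erw [smul_app', iota_app, key f x g]
      conv_rhs => rw [vrep h (f.app p (ModuleCat.freeMk (𝟙 p)))]
      erw [map_smul, kU_map_freeMk]
    · have := hiota 1
      rw [one_smul] at this
      simpa using this
  · intro h f
    have h0 : f.app p (ModuleCat.freeMk (𝟙 p)) = 0 := by
      have H : ∀ (w : (q ⟶ p) →₀ k), w = 0 := fun w =>
        Finsupp.ext fun a => (h (leOfHom a)).elim
      exact H _
    apply NatTrans.ext
    funext x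
    apply ModuleCat.free_hom_ext
    intro g
    show f.app x (ModuleCat.freeMk g) = (0 : kU k p ⟶ kU k q).app x (ModuleCat.freeMk g)
    rw [key f x g, h0, map_zero]
    rfl
end

section
/- The continuous map π : Spec k[x_1,…,x_n] → A^n_{F1}, π(𝔭) = {i : x_i ∉ 𝔭}, is surjective and open when k is a nontrivial commutative ring. In particular, for every subset p ⊆ {1,…,n} the fiber π^{-1}(p) is nonempty. -/
open scoped Classical

/-- `𝔸ⁿ_{𝔽₁} = Set (Fin n)` with the Alexandrov topology of inclusion. -/
instance alexandrovAnF1 {n : ℕ} : TopologicalSpace (Set (Fin n)) where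
  IsOpen s := IsUpperSet s
  isOpen_univ := isUpperSet_univ
  isOpen_inter _ _ hs ht := hs.inter ht
  isOpen_sUnion _ h := isUpperSet_sUnion h

/-- The map `π : Spec k[x_1,…,x_n] → 𝔸ⁿ_{𝔽₁}`, `π(𝔭) = {i | x_i ∉ 𝔭}`. -/
def piSR (k : Type) [CommRing k] {n : ℕ} :
    PrimeSpectrum (MvPolynomial (Fin n) k) → Set (Fin n) :=
  fun P => {i | MvPolynomial.X i ∉ P.asIdeal}

namespace Stmt13Aux

open MvPolynomial

variable (k : Type) [CommRing k] {n : ℕ}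

/-- The endomorphism of `k[x_1,…,x_n]` killing the variables outside `q`. -/
noncomputable def eQ (q : Set (Fin n)) :
    MvPolynomial (Fin n) k →ₐ[k] MvPolynomial (Fin n) k :=
  aeval (fun i => if i ∈ q then X i else 0)

lemma eQ_X_mem {q : Set (Fin n)} {i : Fin n} (h : i ∈ q) : eQ k q (X i) = X i := by
  simp [eQ, h]

lemma eQ_X_notMem {q : Set (Fin n)} {i : Fin n} (h : i ∉ q) : eQ k q (X i) = 0 := by
  simp [eQ, h]

lemma eQ_eQ {q q' : Set (Fin n)} (h : q ⊆ q') (f : MvPolynomial (Fin n) k) :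
    eQ k q (eQ k q' f) = eQ k q f := by
  have : (eQ k q).comp (eQ k q') = eQ k q := by
    apply MvPolynomial.algHom_ext
    intro i
    by_cases hi : i ∈ q'
    · by_cases hi2 : i ∈ q <;>
        simp [AlgHom.comp_apply, eQ_X_mem k hi, eQ_X_mem, eQ_X_notMem, hi2]
    · have hi2 : i ∉ q := fun hq => hi (h hq)
      simp [AlgHom.comp_apply, eQ_X_notMem k hi, eQ_X_notMem k hi2]
  calc eQ k q (eQ k q' f) = ((eQ k q).comp (eQ k q')) f := rfl
    _ = eQ k q f := by rw [this]

lemma sub_eQ_mem (q : Set (Fin n)) (f : MvPolynomial (Fin n) k) :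
    f - eQ k q f ∈ Ideal.span (X '' qᶜ : Set (MvPolynomial (Fin n) k)) := by
  induction f using MvPolynomial.induction_on with
  | C a => simp [eQ]
  | add p r hp hr =>
      simpa [map_add, sub_add_sub_comm] using add_mem hp hr
  | mul_X p i hp =>
      rw [map_mul]
      by_cases hi : i ∈ q
      · rw [eQ_X_mem k hi]
        have : p * X i - eQ k q p * X i = (p - eQ k q p) * X i := by ring
        rw [this]
        exact Ideal.mul_mem_right _ _ hp
      · rw [eQ_X_notMem k hi, mul_zero, sub_zero]
        exact Ideal.mul_mem_left _ _ (Ideal.subset_span ⟨i, hi, rfl⟩)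

/-- Key construction: a prime with prescribed `π`-image avoiding `f`. -/
lemma exists_prime (q : Set (Fin n)) (f : MvPolynomial (Fin n) k)
    (hf : ¬ IsNilpotent (eQ k q f)) :
    ∃ P : PrimeSpectrum (MvPolynomial (Fin n) k), f ∉ P.asIdeal ∧ piSR k P = q := by
  set g := eQ k q f with hg
  set t : Finset (Fin n) := q.toFinite.toFinset with ht
  set pr : MvPolynomial (Fin n) k := ∏ j ∈ t, X j with hpr
  set h := g * pr with hh
  set I := Ideal.span (X '' qᶜ : Set (MvPolynomial (Fin n) k)) with hI
  -- `I` is killed by `eQ q`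
  have hIker : ∀ x ∈ I, eQ k q x = 0 := by
    intro x hx
    have : I ≤ RingHom.ker (eQ k q).toRingHom := by
      rw [Ideal.span_le]
      rintro _ ⟨i, hi, rfl⟩
      simpa [RingHom.mem_ker] using eQ_X_notMem k (q := q) hi
    exact this hx
  -- `eQ q` fixes `h`
  have heh : eQ k q h = h := by
    have hgg : eQ k q g = g := eQ_eQ k (subset_refl q) f
    have hprr : eQ k q pr = pr := by
      rw [hpr, map_prod]
      refine Finset.prod_congr rfl fun j hj => ?_
      exact eQ_X_mem k ((Set.Finite.mem_toFinset _).mp hj)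
    rw [hh, map_mul, hgg, hprr]
  -- powers of `h` are not in `I`
  have hpow : ∀ m : ℕ, h ^ m ∉ I := by
    intro m hm
    have h0 : h ^ m = 0 := by
      have := hIker _ hm
      rwa [map_pow, heh] at this
    apply hf
    refine ⟨m, ?_⟩
    show g ^ m = 0
    have : g ^ m * pr ^ m = 0 * pr ^ m := by
      rw [zero_mul, ← mul_pow, ← hh, h0]
    have hreg : IsRegular (pr ^ m) := by
      rw [hpr]; exact (isRegular_prod_X t).pow m
    simpa using hreg.right this
  -- pass to the quotient and find a prime avoiding `h`
  have hnotnil : ¬ IsNilpotent (Ideal.Quotient.mk I h) := by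
    rintro ⟨m, hm⟩
    rw [← map_pow, Ideal.Quotient.eq_zero_iff_mem] at hm
    exact hpow m hm
  obtain ⟨J, hJprime, hJ⟩ : ∃ J : Ideal (MvPolynomial (Fin n) k ⧸ I), J.IsPrime ∧ Ideal.Quotient.mk I h ∉ J := by
    by_contra hc
    push_neg at hc
    exact hnotnil (nilpotent_iff_mem_prime.mpr fun J hJ => hc J hJ)
  haveI := hJprime
  refine ⟨⟨Ideal.comap (Ideal.Quotient.mk I) J, Ideal.IsPrime.comap _⟩, ?_, ?_⟩
  · -- f ∉ P
    have hIP : I ≤ Ideal.comap (Ideal.Quotient.mk I) J := by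
      intro x hx
      simp [Ideal.mem_comap, Ideal.Quotient.eq_zero_iff_mem.mpr hx]
    have hgP : g ∉ Ideal.comap (Ideal.Quotient.mk I) J := by
      intro hgmem
      exact hJ (Ideal.mem_comap.mp (Ideal.mul_mem_right pr _ hgmem))
    intro hfP
    have : g ∈ Ideal.comap (Ideal.Quotient.mk I) J := by
      have hsub := hIP (sub_eQ_mem k q f)
      rw [← hg] at hsub
      simpa using sub_mem hfP hsub
    exact hgP this
  · -- π P = q
    ext i
    simp only [piSR, Set.mem_setOf_eq]
    constructor
    · intro hXi
      by_contra hiq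
      have : X i ∈ I := Ideal.subset_span ⟨i, hiq, rfl⟩
      exact hXi (by simp [Ideal.mem_comap, Ideal.Quotient.eq_zero_iff_mem.mpr this])
    · intro hiq hXi
      apply hJ
      have hdvd : X i ∣ h := Dvd.dvd.mul_left
        (Finset.dvd_prod_of_mem _ ((Set.Finite.mem_toFinset _).mpr hiq)) g
      obtain ⟨c, hc⟩ := hdvd
      rw [hc]
      exact Ideal.mem_comap.mp (Ideal.mul_mem_right c _ hXi)

end Stmt13Aux

/-- For a nontrivial commutative ring `k`, the continuous map
`π : Spec k[x_1,…,x_n] → 𝔸ⁿ_{𝔽₁}` is surjective and open; in particular every fiber is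
nonempty. -/
theorem stmt13 (k : Type) [CommRing k] [Nontrivial k] (n : ℕ) :
    Continuous (piSR k (n := n)) ∧ IsOpenMap (piSR k (n := n)) ∧
    Function.Surjective (piSR k (n := n)) ∧
    ∀ p : Set (Fin n), (piSR k ⁻¹' {p}).Nonempty := by
  open MvPolynomial Stmt13Aux in
  have hsurj : Function.Surjective (piSR k (n := n)) := by
    intro q
    have h1 : ¬ IsNilpotent (eQ k q (1 : MvPolynomial (Fin n) k)) := by
      rw [map_one]
      rintro ⟨m, hm⟩
      rw [one_pow] at hm
      exact one_ne_zero hm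
    obtain ⟨P, -, hP⟩ := exists_prime k q 1 h1
    exact ⟨P, hP⟩
  refine ⟨?_, ?_, hsurj, fun p => ?_⟩
  · -- continuity
    rw [continuous_def]
    intro s hs
    have hus : IsUpperSet s := hs
    have heq : piSR k ⁻¹' s =
        ⋃ q ∈ s, ⋂ i ∈ q, (PrimeSpectrum.basicOpen (X i : MvPolynomial (Fin n) k) : Set _) := by
      ext P
      simp only [Set.mem_preimage, Set.mem_iUnion, Set.mem_iInter, SetLike.mem_coe,
        PrimeSpectrum.mem_basicOpen]
      constructor
      · intro hP
        exact ⟨piSR k P, hP, fun i hi => hi⟩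
      · rintro ⟨q, hq, hq2⟩
        exact hus (fun i hi => hq2 i hi) hq
    rw [heq]
    refine isOpen_biUnion fun q _ => ?_
    exact Set.Finite.isOpen_biInter q.toFinite
      fun i _ => (PrimeSpectrum.basicOpen _).isOpen
  · -- openness
    rw [PrimeSpectrum.isTopologicalBasis_basic_opens.isOpenMap_iff]
    rintro _ ⟨f, rfl⟩
    show IsUpperSet _
    rintro q q' hqq' ⟨P, hPmem, hPq⟩
    rw [SetLike.mem_coe, PrimeSpectrum.mem_basicOpen] at hPmem
    have hnil : ¬ IsNilpotent (eQ k q' f) := by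
      intro hnil
      have hsub : f - eQ k q' f ∈ P.asIdeal := by
        refine Ideal.span_le.mpr ?_ (sub_eQ_mem k q' f)
        rintro _ ⟨i, hi, rfl⟩
        have : i ∉ q := fun hq => hi (hqq' hq)
        have : i ∉ piSR k P := by rwa [hPq]
        simpa [piSR, not_not] using this
      have : eQ k q' f ∈ P.asIdeal := nilpotent_iff_mem_prime.mp hnil _ P.isPrime
      exact hPmem (by simpa using add_mem hsub this)
    obtain ⟨P', hP'f, hP'⟩ := exists_prime k q' f hnil
    exact ⟨P', by rwa [SetLike.mem_coe, PrimeSpectrum.mem_basicOpen], hP'⟩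
  · obtain ⟨P, hP⟩ := hsurj p
    exact ⟨P, hP⟩
end

section
/- Let D_1, …, D_n be effective Cartier divisors on a scheme S that are in general position, meaning: for every subset p = {i_1,…,i_r} ⊆ {1,…,n} and every point t ∈ D_{i_1} ∩ … ∩ D_{i_r}, local generators f_{i_1},…,f_{i_r} ∈ O_{S,t} of the ideals O_S(−D_{i_j}) form a regular sequence. Then the continuous map f : S → A^n_{F1} determined by f^{-1}(H_i) = D_i is an open map, and a point p ∈ A^n_{F1} lies in the image of f if and only if ⋂_{i∉p} D_i is nonempty; in particular f is surjective if and only if D_1 ∩ … ∩ D_n ≠ ∅. -/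
/-- The continuous map `S → 𝔸ⁿ_{𝔽₁}` determined by the divisors `D_i = V(e i)` (affine
model `S = Spec R`): `t ↦ {i | t ∉ D_i}`. -/
def divMap {R : Type} [CommRing R] {n : ℕ} (e : Fin n → R) :
    PrimeSpectrum R → Set (Fin n) :=
  fun P => {i | e i ∉ P.asIdeal}

/-- Elements of minimal primes of a commutative ring are zero divisors. -/
lemma aux_mem_zeroDivisors_of_mem_minimalPrimes {B : Type*} [CommRing B] {Q : Ideal B}
    (hQ : Q ∈ minimalPrimes B) {x : B} (hx : x ∈ Q) : ∃ z ≠ (0:B), z * x = 0 := by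
  haveI : Q.IsPrime := hQ.1.1
  have h1 : algebraMap B (Localization.AtPrime Q) x ∈ IsLocalRing.maximalIdeal _ :=
    (IsLocalization.AtPrime.to_map_mem_maximal_iff _ Q x).mpr hx
  have h2 : IsNilpotent (algebraMap B (Localization.AtPrime Q) x) :=
    haveI := Ring.KrullDimLE.of_isLocalization Q hQ (Localization.AtPrime Q)
    (Ring.KrullDimLE.isNilpotent_iff_mem_maximalIdeal).mpr h1
  obtain ⟨n, hn⟩ := h2
  rw [← map_pow] at hn
  obtain ⟨m, hm⟩ := (IsLocalization.map_eq_zero_iff Q.primeCompl _ _).mp hn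
  have key : ∀ n (s : B), s ∉ Q → s * x ^ n = 0 → ∃ z ≠ (0:B), z * x = 0 := by
    intro n
    induction n with
    | zero =>
      intro s hs h
      rw [pow_zero, mul_one] at h
      exact absurd (h ▸ Q.zero_mem) hs
    | succ n ih =>
      intro s hs h
      by_cases h0 : s * x ^ n = 0
      · exact ih s hs h0
      · exact ⟨s * x ^ n, h0, by rw [mul_assoc, ← pow_succ]; exact h⟩
  exact key n m m.2 hm

/-- If `Q` is a minimal prime over `I` and `x ∈ Q` then `x` is not regular on `A ⧸ I`. -/
lemma aux_not_isSMulRegular {A : Type*} [CommRing A] {I Q : Ideal A} (hQ : Q ∈ I.minimalPrimes)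
    {x : A} (hx : x ∈ Q) : ¬ IsSMulRegular (A ⧸ I) x := by
  rw [Ideal.minimalPrimes_eq_comap] at hQ
  obtain ⟨Q', hQ', rfl⟩ := hQ
  intro hreg
  have hz : ∃ z ≠ (0 : A ⧸ I), z * Ideal.Quotient.mk I x = 0 :=
    aux_mem_zeroDivisors_of_mem_minimalPrimes hQ' hx
  obtain ⟨z, hz0, hzx⟩ := hz
  obtain ⟨w, rfl⟩ := Ideal.Quotient.mk_surjective z
  apply hz0
  have : x • Ideal.Quotient.mk I w = x • (0 : A ⧸ I) := by
    rw [smul_zero]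
    show Ideal.Quotient.mk I x * Ideal.Quotient.mk I w = 0
    rw [mul_comm]; exact hzx
  simpa using hreg this

/-- Core construction: given a prime `P` and an upper bound `p'` of `divMap e P`, there is a
generization `Q` of `P` with `divMap e Q = p'`. -/
lemma aux_core (R : Type) [CommRing R] {n : ℕ} (e : Fin n → R)
    (hgen : ∀ (s : List (Fin n)), s.Nodup → ∀ P : PrimeSpectrum R,
      (∀ i ∈ s, e i ∈ P.asIdeal) →
      RingTheory.Sequence.IsRegular (Localization.AtPrime P.asIdeal)
        (s.map fun i => algebraMap R (Localization.AtPrime P.asIdeal) (e i)))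
    (P : PrimeSpectrum R) (p' : Set (Fin n)) (hp' : divMap e P ⊆ p') :
    ∃ Q : PrimeSpectrum R, Q.asIdeal ≤ P.asIdeal ∧ divMap e Q = p' := by
  classical
  set l : List (Fin n) := (Finset.univ.filter (fun i => i ∉ p')).toList with hl
  have hlmem : ∀ i, i ∈ l ↔ i ∉ p' := by intro i; simp [hl]
  have hlP : ∀ i ∈ l, e i ∈ P.asIdeal := by
    intro i hi
    by_contra hei
    exact (hlmem i).mp hi (hp' hei)
  set I : Ideal (Localization.AtPrime P.asIdeal) :=
    Ideal.ofList (l.map fun i => algebraMap R (Localization.AtPrime P.asIdeal) (e i)) with hI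
  have hIle : I ≤ IsLocalRing.maximalIdeal (Localization.AtPrime P.asIdeal) := by
    rw [hI, Ideal.span_le]
    rintro x hx
    simp only [Set.mem_setOf_eq, List.mem_map] at hx
    obtain ⟨i, hi, rfl⟩ := hx
    exact (IsLocalization.AtPrime.to_map_mem_maximal_iff _ P.asIdeal _).mpr (hlP i hi)
  obtain ⟨Qa, hQa, hQam⟩ := Ideal.exists_minimalPrimes_le hIle
  haveI : Qa.IsPrime := hQa.1.1
  refine ⟨⟨Ideal.comap (algebraMap R (Localization.AtPrime P.asIdeal)) Qa, inferInstance⟩, ?_, ?_⟩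
  · have h := Ideal.comap_mono (f := algebraMap R (Localization.AtPrime P.asIdeal)) hQam
    exact h.trans (Localization.AtPrime.under_maximalIdeal (I := P.asIdeal)).le
  · ext i
    simp only [divMap, Set.mem_setOf_eq, Ideal.mem_comap]
    constructor
    · intro h
      by_contra hip
      apply h
      refine hQa.1.2 (Ideal.subset_span ?_)
      exact List.mem_map.mpr ⟨i, (hlmem i).mpr hip, rfl⟩
    · intro hip h
      by_cases hP : e i ∈ P.asIdeal
      · have hnd : (l ++ [i]).Nodup := by
          rw [List.nodup_append]
          exact ⟨Finset.nodup_toList _, List.nodup_singleton i,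
            by intro j hj b hb hjb; simp at hb; rw [hb] at hjb; subst hjb; exact ((hlmem j).mp hj) hip⟩
        have hall : ∀ j ∈ l ++ [i], e j ∈ P.asIdeal := by
          intro j hj
          rcases List.mem_append.mp hj with hj | hj
          · exact hlP j hj
          · simp at hj; subst hj; exact hP
        have hreg := (hgen (l ++ [i]) hnd P hall).toIsWeaklyRegular
        rw [List.map_append, RingTheory.Sequence.isWeaklyRegular_append_iff] at hreg
        have h2 := hreg.2
        rw [List.map_singleton, RingTheory.Sequence.isWeaklyRegular_singleton_iff] at h2
        have hsm : (Ideal.ofList (l.map fun i =>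
              algebraMap R (Localization.AtPrime P.asIdeal) (e i)) • ⊤ :
            Submodule (Localization.AtPrime P.asIdeal) (Localization.AtPrime P.asIdeal)) = I := by
          rw [Ideal.smul_eq_mul, Ideal.mul_top, hI]
        rw [hsm] at h2
        exact aux_not_isSMulRegular hQa h h2
      · exact hP ((IsLocalization.AtPrime.to_map_mem_maximal_iff _ P.asIdeal _).mp (hQam h))

/-- (Affine model `S = Spec R`, `D_i = V(e i)`.)  If the effective Cartier
divisors `D_1, …, D_n` are in general position — for every subset `s ⊆ {1,…,n}` and every
point `t ∈ ⋂_{i ∈ s} D_i`, the local generators `e i` form a regular sequence in `O_{S,t}` —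
then the map `f : S → 𝔸ⁿ_{𝔽₁}` with `f⁻¹(H_i) = D_i` is open, its image consists of the
`p` with `⋂_{i ∉ p} D_i ≠ ∅`, and `f` is surjective iff `D_1 ∩ ⋯ ∩ D_n ≠ ∅`. -/
theorem stmt16 (R : Type) [CommRing R] {n : ℕ} (e : Fin n → R)
    (hgen : ∀ (s : List (Fin n)), s.Nodup → ∀ P : PrimeSpectrum R,
      (∀ i ∈ s, e i ∈ P.asIdeal) →
      RingTheory.Sequence.IsRegular (Localization.AtPrime P.asIdeal)
        (s.map fun i => algebraMap R (Localization.AtPrime P.asIdeal) (e i))) :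
    IsOpenMap (divMap e) ∧
    (∀ p : Set (Fin n), p ∈ Set.range (divMap e) ↔
      (⋂ i ∈ pᶜ, PrimeSpectrum.zeroLocus ({e i} : Set R)).Nonempty) ∧
    (Function.Surjective (divMap e) ↔
      (⋂ i : Fin n, PrimeSpectrum.zeroLocus ({e i} : Set R)).Nonempty) := by
  have core := aux_core R e hgen
  refine ⟨?_, ?_, ?_⟩
  · intro U hU
    show IsUpperSet (divMap e '' U)
    rintro p p' hpp' ⟨P, hPU, rfl⟩
    obtain ⟨Q, hQP, hQ⟩ := core P p' hpp'
    exact ⟨Q, ((PrimeSpectrum.le_iff_specializes Q P).mp hQP).mem_open hU hPU, hQ⟩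
  · intro p
    constructor
    · rintro ⟨P, rfl⟩
      refine ⟨P, ?_⟩
      simp only [Set.mem_iInter, PrimeSpectrum.mem_zeroLocus, Set.singleton_subset_iff]
      intro i hi
      by_contra h
      exact hi h
    · rintro ⟨P, hP⟩
      simp only [Set.mem_iInter, PrimeSpectrum.mem_zeroLocus, Set.singleton_subset_iff] at hP
      have hsub : divMap e P ⊆ p := by
        intro i hi
        by_contra hip
        exact hi (hP i hip)
      obtain ⟨Q, _, hQ⟩ := core P p hsub
      exact ⟨Q, hQ⟩
  · constructor
    · intro hsurj
      obtain ⟨P, hP⟩ := hsurj ∅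
      refine ⟨P, ?_⟩
      simp only [Set.mem_iInter, PrimeSpectrum.mem_zeroLocus, Set.singleton_subset_iff]
      intro i
      by_contra h
      have hmem : i ∈ divMap e P := h
      rw [hP] at hmem
      exact hmem
    · rintro ⟨P, hP⟩ p
      simp only [Set.mem_iInter, PrimeSpectrum.mem_zeroLocus, Set.singleton_subset_iff] at hP
      have hsub : divMap e P ⊆ p := fun i hi => absurd (hP i) hi
      obtain ⟨Q, _, hQ⟩ := core P p hsub
      exact ⟨Q, hQ⟩
end
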